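/- arXiv:2510.24299 — 3 statements merged into one kernel-verified Lean document; each statement's English description precedes it below -/
import Mathlib

section
/- Let R ∈ ℝ^{M×N} be the correlation matrix with entries R_{i,p} = h_iᵀ n_p. Then rank(R) equals the rank of the M×N matrix K whose (l,p) entry is h_1ᵀ W_*^{l−1} n_p for l = 1,…,M and p = 1,…,N. -/
open Matrix Finset


private lemma sumMulVec {d : ℕ} {ι : Type*} (s : Finset ι) (A : ι → Matrix (Fin d) (Fin d) ℝ)
    (x : Fin d → ℝ) : (∑ r ∈ s, A r) *ᵥ x = ∑ r ∈ s, A r *ᵥ x := by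
  funext y
  simp only [Matrix.mulVec, dotProduct, Finset.sum_apply, Matrix.sum_apply,
    Finset.sum_mul]
  rw [Finset.sum_comm]

private lemma sumDot {d : ℕ} {ι : Type*} (s : Finset ι) (f : ι → Fin d → ℝ)
    (w : Fin d → ℝ) : (∑ j ∈ s, f j) ⬝ᵥ w = ∑ j ∈ s, f j ⬝ᵥ w := by
  simp only [dotProduct, Finset.sum_apply, Finset.sum_mul]
  rw [Finset.sum_comm]

private lemma vmvT {d : ℕ} (w u x : Fin d → ℝ) :
    (Matrix.vecMulVec w u)ᵀ *ᵥ x = (x ⬝ᵥ w) • u := by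
  funext y
  simp only [Matrix.mulVec, dotProduct, Matrix.transpose_apply, Matrix.vecMulVec_apply,
    Pi.smul_apply, smul_eq_mul, Finset.sum_mul]
  exact Finset.sum_congr rfl fun z _ => by ring

/-- Lemma 1: under the attention recurrence, the rank of the correlation matrix
`R (i,p) = hᵢᵀ nₚ` equals the rank of the matrix `K (l,p) = h₁ᵀ W₊^(l-1) nₚ`. -/
theorem stmt0 (d N M : ℕ) (hd : 0 < d) (hN : 0 < N) (hM : 0 < M)
    (n : ℕ → (Fin d → ℝ)) (h : ℕ → (Fin d → ℝ)) (W : Matrix (Fin d) (Fin d) ℝ)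
    (c : ℕ → ℝ)
    (Wstar : Matrix (Fin d) (Fin d) ℝ)
    (hWstar : Wstar = ∑ r ∈ Finset.Icc 1 N, vecMulVec (W *ᵥ n r) (n r))
    (Z : ℕ → ℝ)
    (hZ : ∀ i, 1 ≤ i → i + 1 ≤ M →
      Z i = (∑ j ∈ Finset.Icc 1 N, h i ⬝ᵥ (W *ᵥ n j)) +
            ∑ k ∈ Finset.Icc 1 i, h i ⬝ᵥ (W *ᵥ h k))
    (hZne : ∀ i, 1 ≤ i → i + 1 ≤ M → Z i ≠ 0)
    (hc : ∀ i, 1 ≤ i → i + 1 ≤ M → c (i + 1) ≠ 0)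
    (hrec : ∀ i, 1 ≤ i → i + 1 ≤ M →
      h (i + 1) = (c (i + 1) / Z i) •
        ((∑ r ∈ Finset.Icc 1 N, (h i ⬝ᵥ (W *ᵥ n r)) • n r) +
         ∑ k ∈ Finset.Icc 1 i, (h i ⬝ᵥ (W *ᵥ h k)) • h k))
    (R K : Matrix (Fin M) (Fin N) ℝ)
    (hR : ∀ i p, R i p = h (i.1 + 1) ⬝ᵥ n (p.1 + 1))
    (hK : ∀ l p, K l p = h 1 ⬝ᵥ ((Wstar ^ l.1) *ᵥ n (p.1 + 1))) :
    R.rank = K.rank := by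
  classical
  set v : ℕ → (Fin d → ℝ) := fun j => ((Wstarᵀ) ^ j) *ᵥ h 1 with hv
  have hvs : ∀ j, Wstarᵀ *ᵥ v j = v (j + 1) := by
    intro j
    simp only [hv, mulVec_mulVec, ← pow_succ']
  -- the first sum in the recurrence is `Wstarᵀ *ᵥ h i`
  have S1 : ∀ i, (∑ r ∈ Finset.Icc 1 N, (h i ⬝ᵥ (W *ᵥ n r)) • n r) = Wstarᵀ *ᵥ h i := by
    intro i
    rw [hWstar, transpose_sum, sumMulVec]
    exact Finset.sum_congr rfl fun r _ => (vmvT _ _ _).symm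
  -- main induction: h (i+1) is t • v i plus something in the span of earlier v's
  have main : ∀ i, i < M → ∃ t : ℝ, t ≠ 0 ∧
      h (i + 1) - t • v i ∈ Submodule.span ℝ (v '' Set.Iio i) := by
    intro i
    induction i using Nat.strong_induction_on with
    | _ i IH =>
      intro hiM
      match i with
      | 0 =>
        refine ⟨1, one_ne_zero, ?_⟩
        have : h 1 - (1 : ℝ) • v 0 = 0 := by simp [hv]
        rw [this]; exact Submodule.zero_mem _
      | (s + 1) =>
        obtain ⟨t, ht, hw⟩ := IH s (Nat.lt_succ_self s) (by omega)
        have hrec' := hrec (s + 1) (by omega) (by omega)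
        rw [S1 (s + 1)] at hrec'
        refine ⟨(c (s + 1 + 1) / Z (s + 1)) * t, ?_, ?_⟩
        · exact mul_ne_zero (div_ne_zero (hc (s + 1) (by omega) (by omega))
            (hZne (s + 1) (by omega) (by omega))) ht
        · rw [hrec']
          have split : Wstarᵀ *ᵥ h (s + 1)
              = Wstarᵀ *ᵥ (h (s + 1) - t • v s) + t • v (s + 1) := by
            rw [← hvs s, mulVec_sub, mulVec_smul]
            abel
          rw [split]
          have expand : (c (s + 1 + 1) / Z (s + 1)) •
                ((Wstarᵀ *ᵥ (h (s + 1) - t • v s) + t • v (s + 1)) +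
                  ∑ k ∈ Finset.Icc 1 (s + 1), (h (s + 1) ⬝ᵥ (W *ᵥ h k)) • h k) -
                ((c (s + 1 + 1) / Z (s + 1)) * t) • v (s + 1)
              = (c (s + 1 + 1) / Z (s + 1)) • (Wstarᵀ *ᵥ (h (s + 1) - t • v s)) +
                (c (s + 1 + 1) / Z (s + 1)) •
                  ∑ k ∈ Finset.Icc 1 (s + 1), (h (s + 1) ⬝ᵥ (W *ᵥ h k)) • h k := by
            module
          rw [expand]
          refine Submodule.add_mem _ (Submodule.smul_mem _ _ ?_) (Submodule.smul_mem _ _ ?_)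
          · -- Wstarᵀ *ᵥ w ∈ span (v '' Iio (s+1))
            have hmem := Submodule.apply_mem_span_image_of_mem_span
              (Matrix.mulVecLin Wstarᵀ) hw
            refine Submodule.span_mono ?_ hmem
            rintro x ⟨y, ⟨j, hj, rfl⟩, rfl⟩
            exact ⟨j + 1, by simpa using Nat.succ_lt_succ hj, (hvs j).symm⟩
          · -- each h k, 1 ≤ k ≤ s+1, is in the span
            refine Submodule.sum_mem _ fun k hk => Submodule.smul_mem _ _ ?_
            simp only [Finset.mem_Icc] at hk
            obtain ⟨hk1, hk2⟩ := hk
            obtain ⟨k', rfl⟩ : ∃ k', k = k' + 1 := ⟨k - 1, by omega⟩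
            obtain ⟨tk, htk, hwk⟩ := IH k' (by omega) (by omega)
            have : h (k' + 1) = (h (k' + 1) - tk • v k') + tk • v k' := by abel
            rw [this]
            refine Submodule.add_mem _ ?_ (Submodule.smul_mem _ _ ?_)
            · refine Submodule.span_mono ?_ hwk
              exact Set.image_mono fun j hj => by
                simp only [Set.mem_Iio] at *; omega
            · exact Submodule.subset_span ⟨k', by simp only [Set.mem_Iio]; omega, rfl⟩
  -- extract coefficients
  have coeff : ∀ i, ∃ a : ℕ → ℝ, i < M → (a i ≠ 0 ∧ (∀ j, i < j → a j = 0) ∧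
      h (i + 1) = ∑ j ∈ Finset.range (i + 1), a j • v j) := by
    intro i
    by_cases hiM : i < M
    · obtain ⟨t, ht, hw⟩ := main i hiM
      have himg : v '' Set.Iio i = Set.range (fun j : Fin i => v j.1) := by
        ext x
        constructor
        · rintro ⟨j, hj, rfl⟩; exact ⟨⟨j, hj⟩, rfl⟩
        · rintro ⟨j, rfl⟩; exact ⟨j.1, j.2, rfl⟩
      rw [himg, Submodule.mem_span_range_iff_exists_fun] at hw
      obtain ⟨b, hb⟩ := hw
      refine ⟨fun j => if hj : j < i then b ⟨j, hj⟩ else if j = i then t else 0,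
        fun _ => ⟨by simp [ht], fun j hj => by
          simp only [dif_neg (by omega : ¬ j < i), if_neg (by omega : ¬ j = i)], ?_⟩⟩
      rw [Finset.sum_range_succ]
      have hsum : ∑ j ∈ Finset.range i,
          (if hj : j < i then b ⟨j, hj⟩ else if j = i then t else 0) • v j
          = ∑ j : Fin i, b j • v j.1 := by
        rw [Finset.sum_range fun j => _]
        exact Finset.sum_congr rfl fun j _ => by rw [dif_pos j.2]
      rw [hsum, hb]
      simp only [dif_neg (lt_irrefl i), eq_self_iff_true, if_true]
      rw [sub_add_cancel]
    · exact ⟨0, fun hiM' => absurd hiM' hiM⟩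
  choose a ha using coeff
  -- the triangular change-of-basis matrix
  set L : Matrix (Fin M) (Fin M) ℝ := Matrix.of (fun i l => a i.1 l.1) with hL
  have hdot : ∀ j (w : Fin d → ℝ), v j ⬝ᵥ w = h 1 ⬝ᵥ ((Wstar ^ j) *ᵥ w) := by
    intro j w
    simp only [hv]
    rw [← transpose_pow, mulVec_transpose, dotProduct_mulVec]
  have hRLK : R = L * K := by
    ext i p
    obtain ⟨hane, hzero, hsum⟩ := ha i.1 i.2
    rw [hR, mul_apply, hsum]
    have : ∀ l : Fin M, L i l * K l p = a i.1 l.1 * (h 1 ⬝ᵥ ((Wstar ^ l.1) *ᵥ n (p.1 + 1))) := by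
      intro l; rw [hK]; rfl
    simp only [this]
    -- turn the LHS into a sum over `Fin M`
    have hcard : i.1 + 1 ≤ M := i.2
    have hdsum : (∑ j ∈ Finset.range (i.1 + 1), a i.1 j • v j) ⬝ᵥ n (p.1 + 1)
        = ∑ j ∈ Finset.range (i.1 + 1), a i.1 j * (h 1 ⬝ᵥ ((Wstar ^ j) *ᵥ n (p.1 + 1))) := by
      rw [sumDot]
      refine Finset.sum_congr rfl fun j _ => ?_
      rw [smul_dotProduct, hdot, smul_eq_mul]
    rw [hdsum]
    rw [Fin.sum_univ_eq_sum_range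
      (fun l => a i.1 l * (h 1 ⬝ᵥ ((Wstar ^ l) *ᵥ n (p.1 + 1)))) M]
    apply Finset.sum_subset (Finset.range_subset_range.mpr hcard)
    intro j hjM hj
    rw [Finset.mem_range, not_lt] at hj
    rw [hzero j (by omega), zero_mul]
  -- L is lower triangular with nonzero diagonal, hence invertible
  have hLtri : L.BlockTriangular OrderDual.toDual := by
    intro i l hil
    have : i.1 < l.1 := hil
    exact (ha i.1 i.2).2.1 l.1 this
  have hdet : L.det = ∏ i : Fin M, L i i := Matrix.det_of_lowerTriangular L hLtri
  have hdetne : IsUnit L.det := by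
    rw [hdet]
    rw [isUnit_iff_ne_zero]
    exact Finset.prod_ne_zero_iff.mpr fun i _ => (ha i.1 i.2).1
  rw [hRLK]
  exact Matrix.rank_mul_eq_right_of_isUnit_det L K hdetne
end

section
/- Let v = rank(W_*) and let R ∈ ℝ^{M×N} be the correlation matrix with entries R_{i,p} = h_iᵀ n_p. Assume additionally that (i) dim span{ (W_*ᵀ)^l n_N : 1 ≤ l ≤ M } = v, and (ii) the row space of W_* (i.e., the range of W_*ᵀ) intersects the orthogonal complement of span{n_1, …, n_N} only in the zero vector. Then rank(R) = v. -/
open Matrix Finset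

/-- Under the attention recurrence, if (i) the Krylov span `{(W₊ᵀ)^l n_N : 1 ≤ l ≤ M}` has
dimension `v = rank W₊` and (ii) the row space of `W₊` meets the orthogonal complement of
`span{n₁,…,n_N}` only at `0`, then the correlation matrix `R` has rank `v`. -/
theorem stmt11 (d N M : ℕ) (hd : 0 < d) (hN : 0 < N) (hM : 0 < M)
    (n : ℕ → (Fin d → ℝ)) (h : ℕ → (Fin d → ℝ)) (W : Matrix (Fin d) (Fin d) ℝ)
    (c : ℕ → ℝ)
    (Wstar : Matrix (Fin d) (Fin d) ℝ)
    (hWstar : Wstar = ∑ r ∈ Finset.Icc 1 N, vecMulVec (W *ᵥ n r) (n r))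
    (Z : ℕ → ℝ)
    (hZ0 : Z 0 = ∑ j ∈ Finset.Icc 1 N, n N ⬝ᵥ (W *ᵥ n j))
    (hZ0ne : Z 0 ≠ 0) (hc1 : c 1 ≠ 0)
    (hh1 : h 1 = (c 1 / Z 0) • ∑ r ∈ Finset.Icc 1 N, (n N ⬝ᵥ (W *ᵥ n r)) • n r)
    (hZ : ∀ i, 1 ≤ i → i + 1 ≤ M →
      Z i = (∑ j ∈ Finset.Icc 1 N, h i ⬝ᵥ (W *ᵥ n j)) +
            ∑ k ∈ Finset.Icc 1 i, h i ⬝ᵥ (W *ᵥ h k))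
    (hZne : ∀ i, 1 ≤ i → i + 1 ≤ M → Z i ≠ 0)
    (hc : ∀ i, 1 ≤ i → i + 1 ≤ M → c (i + 1) ≠ 0)
    (hrec : ∀ i, 1 ≤ i → i + 1 ≤ M →
      h (i + 1) = (c (i + 1) / Z i) •
        ((∑ r ∈ Finset.Icc 1 N, (h i ⬝ᵥ (W *ᵥ n r)) • n r) +
         ∑ k ∈ Finset.Icc 1 i, (h i ⬝ᵥ (W *ᵥ h k)) • h k))
    (R : Matrix (Fin M) (Fin N) ℝ)
    (hR : ∀ i p, R i p = h (i.1 + 1) ⬝ᵥ n (p.1 + 1))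
    (hKrylov : Module.finrank ℝ
        (Submodule.span ℝ {y : Fin d → ℝ | ∃ l ∈ Finset.Icc 1 M, y = (Wstarᵀ ^ l) *ᵥ n N}) =
      Wstar.rank)
    (hRowSpace : ∀ x : Fin d → ℝ, (∃ y : Fin d → ℝ, Wstarᵀ *ᵥ y = x) →
      (∀ p ∈ Finset.Icc 1 N, x ⬝ᵥ n p = 0) → x = 0) :
    R.rank = Wstar.rank := by
  classical
  -- key identity: Wstarᵀ *ᵥ x = ∑ (x ⬝ᵥ W n_r) • n_r
  have hWT : ∀ x : Fin d → ℝ,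
      Wstarᵀ *ᵥ x = ∑ r ∈ Finset.Icc 1 N, (x ⬝ᵥ (W *ᵥ n r)) • n r := by
    intro x
    funext i
    rw [hWstar]
    simp only [Matrix.transpose_sum, Matrix.mulVec, Matrix.transpose_apply, Matrix.sum_apply,
      vecMulVec_apply, dotProduct, Finset.sum_apply, Pi.smul_apply, smul_eq_mul, Finset.sum_mul,
      Finset.mul_sum]
    rw [Finset.sum_comm]
    exact Finset.sum_congr rfl fun r _ => Finset.sum_congr rfl fun j _ =>
      Finset.sum_congr rfl fun k _ => by ring
  -- Krylov vectors and spans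
  set vK : ℕ → (Fin d → ℝ) := fun l => (Wstarᵀ ^ l) *ᵥ n N with hvK
  set K : ℕ → Submodule ℝ (Fin d → ℝ) :=
    fun i => Submodule.span ℝ {y : Fin d → ℝ | ∃ l ∈ Finset.Icc 1 i, y = vK l} with hK
  set H : ℕ → Submodule ℝ (Fin d → ℝ) :=
    fun i => Submodule.span ℝ {y : Fin d → ℝ | ∃ j ∈ Finset.Icc 1 i, y = h j} with hHdef
  have hKmono : ∀ a b : ℕ, a ≤ b → K a ≤ K b := by
    intro a b hab
    refine Submodule.span_mono ?_
    rintro y ⟨l, hl, rfl⟩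
    simp only [Finset.mem_Icc] at hl
    exact ⟨l, Finset.mem_Icc.mpr ⟨hl.1, hl.2.trans hab⟩, rfl⟩
  have hHmono : ∀ a b : ℕ, a ≤ b → H a ≤ H b := by
    intro a b hab
    refine Submodule.span_mono ?_
    rintro y ⟨l, hl, rfl⟩
    simp only [Finset.mem_Icc] at hl
    exact ⟨l, Finset.mem_Icc.mpr ⟨hl.1, hl.2.trans hab⟩, rfl⟩
  have hpow : ∀ l : ℕ, Wstarᵀ *ᵥ vK l = vK (l + 1) := by
    intro l
    show Wstarᵀ *ᵥ ((Wstarᵀ ^ l) *ᵥ n N) = (Wstarᵀ ^ (l + 1)) *ᵥ n N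
    rw [Matrix.mulVec_mulVec, ← pow_succ']
  have hAK : ∀ (j : ℕ) (x : Fin d → ℝ), x ∈ K j → Wstarᵀ *ᵥ x ∈ K (j + 1) := by
    intro j x hx
    induction hx using Submodule.span_induction with
    | mem y hy =>
      obtain ⟨l, hl, rfl⟩ := hy
      simp only [Finset.mem_Icc] at hl
      rw [hpow]
      exact Submodule.subset_span ⟨l + 1, Finset.mem_Icc.mpr ⟨by omega, by omega⟩, rfl⟩
    | zero => rw [Matrix.mulVec_zero]; exact Submodule.zero_mem _
    | add y z _ _ hy hz => rw [Matrix.mulVec_add]; exact Submodule.add_mem _ hy hz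
    | smul a y _ hy => rw [Matrix.mulVec_smul]; exact Submodule.smul_mem _ _ hy
  -- main induction
  have main : ∀ i, 1 ≤ i → i ≤ M →
      (∃ μ : ℝ, μ ≠ 0 ∧ h i - μ • vK i ∈ K (i - 1)) ∧ H i = K i := by
    intro i hi
    induction i, hi using Nat.le_induction with
    | base =>
      intro _
      have h1 : h 1 = (c 1 / Z 0) • vK 1 := by
        rw [hh1, ← hWT (n N)]
        simp only [hvK, pow_one]
      have hμ : c 1 / Z 0 ≠ 0 := div_ne_zero hc1 hZ0ne
      refine ⟨⟨c 1 / Z 0, hμ, ?_⟩, ?_⟩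
      · rw [h1, sub_self]; exact Submodule.zero_mem _
      · apply le_antisymm
        · refine Submodule.span_le.mpr ?_
          rintro y ⟨j, hj, rfl⟩
          simp only [Finset.mem_Icc] at hj
          have : j = 1 := by omega
          subst this
          rw [h1]
          exact Submodule.smul_mem _ _
            (Submodule.subset_span ⟨1, Finset.mem_Icc.mpr ⟨le_refl 1, le_refl 1⟩, rfl⟩)
        · refine Submodule.span_le.mpr ?_
          rintro y ⟨l, hl, rfl⟩
          simp only [Finset.mem_Icc] at hl
          have : l = 1 := by omega
          subst this
          have : vK 1 = (c 1 / Z 0)⁻¹ • h 1 := by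
            rw [h1, smul_smul, inv_mul_cancel₀ hμ, one_smul]
          rw [this]
          exact Submodule.smul_mem _ _
            (Submodule.subset_span ⟨1, Finset.mem_Icc.mpr ⟨le_refl 1, le_refl 1⟩, rfl⟩)
    | succ i hi ih =>
      intro hi1M
      obtain ⟨⟨μ, hμ, hw⟩, hHK⟩ := ih (by omega)
      set a := c (i + 1) / Z i with ha_def
      have ha : a ≠ 0 := div_ne_zero (hc i hi hi1M) (hZne i hi hi1M)
      have hrec' : h (i + 1) = a • (Wstarᵀ *ᵥ h i) +
          a • (∑ k ∈ Finset.Icc 1 i, (h i ⬝ᵥ (W *ᵥ h k)) • h k) := by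
        rw [hrec i hi hi1M, hWT (h i), smul_add]
      have hμ' : a * μ ≠ 0 := mul_ne_zero ha hμ
      have hmem : h (i + 1) - (a * μ) • vK (i + 1) ∈ K i := by
        have hsplit : h (i + 1) - (a * μ) • vK (i + 1) =
            a • (Wstarᵀ *ᵥ (h i - μ • vK i)) +
            a • (∑ k ∈ Finset.Icc 1 i, (h i ⬝ᵥ (W *ᵥ h k)) • h k) := by
          rw [hrec', Matrix.mulVec_sub, Matrix.mulVec_smul, hpow]
          module
        rw [hsplit]
        refine Submodule.add_mem _ ?_ ?_
        · refine Submodule.smul_mem _ _ ?_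
          have := hAK (i - 1) _ hw
          rwa [Nat.sub_add_cancel hi] at this
        · refine Submodule.smul_mem _ _ ?_
          rw [← hHK]
          refine Submodule.sum_mem _ fun k hk => Submodule.smul_mem _ _ ?_
          exact Submodule.subset_span ⟨k, hk, rfl⟩
      have hvmem : vK (i + 1) ∈ H (i + 1) := by
        have hexp : vK (i + 1) =
            (a * μ)⁻¹ • (h (i + 1) - (h (i + 1) - (a * μ) • vK (i + 1))) := by
          rw [sub_sub_cancel, smul_smul, inv_mul_cancel₀ hμ', one_smul]
        rw [hexp]
        refine Submodule.smul_mem _ _ (Submodule.sub_mem _ ?_ ?_)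
        · exact Submodule.subset_span ⟨i + 1, Finset.mem_Icc.mpr ⟨by omega, le_refl _⟩, rfl⟩
        · exact hHmono i (i + 1) (by omega) (hHK ▸ hmem)
      refine ⟨⟨a * μ, hμ', by simpa using hmem⟩, ?_⟩
      apply le_antisymm
      · refine Submodule.span_le.mpr ?_
        rintro y ⟨j, hj, rfl⟩
        simp only [Finset.mem_Icc] at hj
        rcases Nat.lt_or_ge j (i + 1) with hj' | hj'
        · exact hKmono i (i + 1) (by omega)
            (hHK ▸ Submodule.subset_span ⟨j, Finset.mem_Icc.mpr ⟨hj.1, by omega⟩, rfl⟩)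
        · have : j = i + 1 := by omega
          subst this
          have : h (i + 1) = (a * μ) • vK (i + 1) + (h (i + 1) - (a * μ) • vK (i + 1)) := by
            abel
          rw [this]
          refine Submodule.add_mem _ (Submodule.smul_mem _ _ ?_) (hKmono i (i + 1) (by omega) hmem)
          exact Submodule.subset_span ⟨i + 1, Finset.mem_Icc.mpr ⟨by omega, le_refl _⟩, rfl⟩
      · refine Submodule.span_le.mpr ?_
        rintro y ⟨l, hl, rfl⟩
        simp only [Finset.mem_Icc] at hl
        rcases Nat.lt_or_ge l (i + 1) with hl' | hl'
        · refine hHmono i (i + 1) (by omega) ?_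
          rw [hHK]
          exact Submodule.subset_span ⟨l, Finset.mem_Icc.mpr ⟨hl.1, by omega⟩, rfl⟩
        · have : l = i + 1 := by omega
          subst this
          exact hvmem
  obtain ⟨-, hHM⟩ := main M hM le_rfl
  -- the evaluation map
  set En : Matrix (Fin N) (Fin d) ℝ := Matrix.of fun p j => n (p.1 + 1) j with hEn
  set φ : (Fin d → ℝ) →ₗ[ℝ] (Fin N → ℝ) := En.mulVecLin with hφdef
  have hφ : ∀ (x : Fin d → ℝ) (p : Fin N), φ x p = x ⬝ᵥ n (p.1 + 1) := by
    intro x p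
    show (En *ᵥ x) p = _
    rw [Matrix.mulVec]
    exact dotProduct_comm _ _
  -- rank R = finrank of span of rows
  have hrankR : R.rank = Module.finrank ℝ (Submodule.span ℝ (Set.range R)) := by
    rw [← Matrix.rank_transpose R, Matrix.rank, Matrix.range_mulVecLin]
    rfl
  -- rows of R are φ of the h's
  have hrows : Set.range R = φ '' {y : Fin d → ℝ | ∃ j ∈ Finset.Icc 1 M, y = h j} := by
    ext y
    constructor
    · rintro ⟨i, rfl⟩
      refine ⟨h (i.1 + 1), ⟨i.1 + 1, Finset.mem_Icc.mpr ⟨Nat.le_add_left 1 _, i.isLt⟩, rfl⟩, ?_⟩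
      funext p
      rw [hφ, hR]
    · rintro ⟨x, ⟨j, hj, rfl⟩, rfl⟩
      simp only [Finset.mem_Icc] at hj
      obtain ⟨j', rfl⟩ : ∃ j', j = j' + 1 := ⟨j - 1, by omega⟩
      refine ⟨⟨j', by omega⟩, ?_⟩
      funext p
      rw [hR, hφ]
  have hspanrows : Submodule.span ℝ (Set.range R) = Submodule.map φ (H M) := by
    rw [hrows, hHdef, Submodule.map_span]
  -- K M is contained in the row space of Wstar
  have hKrange : ∀ x ∈ K M, ∃ y : Fin d → ℝ, Wstarᵀ *ᵥ y = x := by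
    intro x hx
    induction hx using Submodule.span_induction with
    | mem y hy =>
      obtain ⟨l, hl, rfl⟩ := hy
      simp only [Finset.mem_Icc] at hl
      refine ⟨vK (l - 1), ?_⟩
      rw [hpow, Nat.sub_add_cancel hl.1]
    | zero => exact ⟨0, Matrix.mulVec_zero _⟩
    | add y z _ _ hy hz =>
      obtain ⟨u, hu⟩ := hy; obtain ⟨v, hv⟩ := hz
      exact ⟨u + v, by rw [Matrix.mulVec_add, hu, hv]⟩
    | smul a y _ hy =>
      obtain ⟨u, hu⟩ := hy
      exact ⟨a • u, by rw [Matrix.mulVec_smul, hu]⟩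
  -- φ is injective on K M
  have hinj : ∀ x ∈ K M, φ x = 0 → x = 0 := by
    intro x hx hφx
    refine hRowSpace x (hKrange x hx) ?_
    intro p hp
    simp only [Finset.mem_Icc] at hp
    have := congrFun hφx ⟨p - 1, by omega⟩
    rw [hφ] at this
    simpa [Nat.sub_add_cancel hp.1] using this
  -- conclude
  have hker : LinearMap.ker (φ.comp (H M).subtype) = ⊥ := by
    rw [LinearMap.ker_eq_bot']
    intro x hx0
    exact Subtype.ext (hinj x.1 (hHM ▸ x.2) hx0)
  have hfr := LinearMap.finrank_range_of_inj (LinearMap.ker_eq_bot.mp hker)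
  rw [LinearMap.range_comp, Submodule.range_subtype] at hfr
  rw [hrankR, hspanrows, hfr, hHM, ← hKrylov]
end

section
/- Let R ∈ ℝ^{M×N} be the correlation matrix with entries R_{i,p} = h_iᵀ n_p. Then rank(R) ≤ rank(W_*). -/
open Matrix Finset

/-- Under the attention recurrence (for the correct solution), the correlation matrix `R`
with entries `R_{i,p} = h_iᵀ n_p` satisfies `rank R ≤ rank W₊`. -/
theorem stmt12 (d N M : ℕ) (hd : 0 < d) (hN : 0 < N) (hM : 0 < M)
    (n : ℕ → (Fin d → ℝ)) (h : ℕ → (Fin d → ℝ)) (W : Matrix (Fin d) (Fin d) ℝ)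
    (c : ℕ → ℝ)
    (Wstar : Matrix (Fin d) (Fin d) ℝ)
    (hWstar : Wstar = ∑ r ∈ Finset.Icc 1 N, vecMulVec (W *ᵥ n r) (n r))
    (Z : ℕ → ℝ)
    (hZ0 : Z 0 = ∑ j ∈ Finset.Icc 1 N, n N ⬝ᵥ (W *ᵥ n j))
    (hZ0ne : Z 0 ≠ 0) (hc1 : c 1 ≠ 0)
    (hh1 : h 1 = (c 1 / Z 0) • ∑ r ∈ Finset.Icc 1 N, (n N ⬝ᵥ (W *ᵥ n r)) • n r)
    (hZ : ∀ i, 1 ≤ i → i + 1 ≤ M →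
      Z i = (∑ j ∈ Finset.Icc 1 N, h i ⬝ᵥ (W *ᵥ n j)) +
            ∑ k ∈ Finset.Icc 1 i, h i ⬝ᵥ (W *ᵥ h k))
    (hZne : ∀ i, 1 ≤ i → i + 1 ≤ M → Z i ≠ 0)
    (hc : ∀ i, 1 ≤ i → i + 1 ≤ M → c (i + 1) ≠ 0)
    (hrec : ∀ i, 1 ≤ i → i + 1 ≤ M →
      h (i + 1) = (c (i + 1) / Z i) •
        ((∑ r ∈ Finset.Icc 1 N, (h i ⬝ᵥ (W *ᵥ n r)) • n r) +
         ∑ k ∈ Finset.Icc 1 i, (h i ⬝ᵥ (W *ᵥ h k)) • h k))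
    (R : Matrix (Fin M) (Fin N) ℝ)
    (hR : ∀ i p, R i p = h (i.1 + 1) ⬝ᵥ n (p.1 + 1)) :
    R.rank ≤ Wstar.rank := by
  have hsmul : ∀ (a : ℝ) (x : Fin d → ℝ), (a • x) ᵥ* Wstar = a • (x ᵥ* Wstar) :=
    fun a x => Wstar.vecMulLinear.map_smul a x
  have hsum : ∀ (s : Finset ℕ) (f : ℕ → Fin d → ℝ),
      (∑ i ∈ s, f i) ᵥ* Wstar = ∑ i ∈ s, f i ᵥ* Wstar :=
    fun s f => map_sum Wstar.vecMulLinear f s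
  -- key computation: multiplying a vector by Wstar on the left
  have hvm : ∀ x : Fin d → ℝ,
      x ᵥ* Wstar = ∑ r ∈ Finset.Icc 1 N, (x ⬝ᵥ (W *ᵥ n r)) • n r := by
    intro x
    subst hWstar
    ext j
    simp only [Matrix.vecMul, dotProduct, Matrix.sum_apply, Matrix.vecMulVec_apply,
      Finset.sum_apply, Pi.smul_apply, smul_eq_mul, Finset.mul_sum, Finset.sum_mul]
    rw [Finset.sum_comm]
    refine Finset.sum_congr rfl fun r _ => Finset.sum_congr rfl fun i _ => by ring
  -- every h i (1 ≤ i ≤ M) lies in the "row space" of Wstar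
  have hv : ∀ i, 1 ≤ i → i ≤ M → ∃ v : Fin d → ℝ, h i = v ᵥ* Wstar := by
    intro i
    induction i using Nat.strong_induction_on with
    | _ i ih =>
      intro hi1 hiM
      rcases Nat.lt_or_ge 1 i with h1 | h1
      · -- i ≥ 2 : inductive step
        obtain ⟨k, rfl⟩ : ∃ k, i = k + 1 := ⟨i - 1, by omega⟩
        have hk1 : 1 ≤ k := by omega
        have hkM : k + 1 ≤ M := hiM
        obtain ⟨vf, hvf⟩ : ∃ vf : ℕ → Fin d → ℝ,
            ∀ k' ∈ Finset.Icc 1 k, h k' = vf k' ᵥ* Wstar := by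
          choose! vf hvf using fun k' (hk' : k' ∈ Finset.Icc 1 k) =>
            ih k' (by simp [Finset.mem_Icc] at hk'; omega)
              (by simp [Finset.mem_Icc] at hk'; omega)
              (by simp [Finset.mem_Icc] at hk'; omega)
          exact ⟨vf, hvf⟩
        refine ⟨(c (k + 1) / Z k) •
          (h k + ∑ k' ∈ Finset.Icc 1 k, (h k ⬝ᵥ (W *ᵥ h k')) • vf k'), ?_⟩
        rw [hrec k hk1 hkM, hsmul, Matrix.add_vecMul, hsum, ← hvm (h k)]
        congr 2
        refine Finset.sum_congr rfl fun k' hk' => ?_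
        rw [hsmul, ← hvf k' hk']
      · -- i = 1 : base case
        have hi : i = 1 := by omega
        subst hi
        exact ⟨(c 1 / Z 0) • n N, by rw [hsmul, hvm (n N), hh1]⟩
  -- choose witnesses globally
  obtain ⟨vf, hvf⟩ : ∃ vf : ℕ → Fin d → ℝ,
      ∀ i, 1 ≤ i → i ≤ M → h i = vf i ᵥ* Wstar := by
    choose! vf hvf using hv
    exact ⟨vf, hvf⟩
  -- factor R = V * Wstar * Nm
  set V : Matrix (Fin M) (Fin d) ℝ := Matrix.of fun i a => vf (i.1 + 1) a with hV
  set Nm : Matrix (Fin d) (Fin N) ℝ := Matrix.of fun a p => n (p.1 + 1) a with hNm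
  have hReq : R = V * Wstar * Nm := by
    ext i p
    rw [hR i p, hvf (i.1 + 1) (by omega) (by omega)]
    simp only [Matrix.mul_apply, hV, hNm, Matrix.of_apply, Matrix.vecMul, dotProduct,
      Finset.sum_mul]
  calc R.rank = (V * Wstar * Nm).rank := by rw [hReq]
    _ ≤ (V * Wstar).rank := Matrix.rank_mul_le_left _ _
    _ ≤ Wstar.rank := Matrix.rank_mul_le_right _ _
end
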